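/- arXiv:1912.06904 — 2 statements merged into one kernel-verified Lean document; each statement's English description precedes it below -/
import Mathlib

section
/- Let s ∈ ℕ, let ρ₁,…,ρ_N ∈ [0,∞), and let C ⊂ ℝ^N be a convex set contained in the positive orthant. Then the function F : (ℝⁿ)^N → [0,∞) defined by F(x₁,…,x_N) = vol_{n+s}( ⊕_C( B^s_{ρ₁}(x₁), …, B^s_{ρ_N}(x_N) ) ) is Steiner convex: for every unit vector θ ∈ S^{n−1} and every choice of points y₁,…,y_N ∈ θ^⊥, the function (t₁,…,t_N) ↦ F(y₁ + t₁θ, …, y_N + t_Nθ) on ℝ^N is even and convex. -/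
open MeasureTheory Filter Pointwise ENNReal

noncomputable section

/-- `B^s_ρ(x)`: the s-dimensional Euclidean ball of radius `ρ` in the fiber over `x`. -/
def fiberBall {n s : ℕ} (x : EuclideanSpace ℝ (Fin n)) (ρ : ℝ) :
    Set (EuclideanSpace ℝ (Fin n) × EuclideanSpace ℝ (Fin s)) :=
  {p | p.1 = x ∧ ‖p.2‖ ≤ ρ}

/-- The `M`-combination `⊕_C(K₁,…,K_N)`. -/
def Mcomb {N : ℕ} {V : Type*} [AddCommMonoid V] [Module ℝ V]
    (C : Set (Fin N → ℝ)) (K : Fin N → Set V) : Set V :=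
  {v | ∃ m ∈ C, ∃ u : Fin N → V, (∀ i, u i ∈ K i) ∧ v = ∑ i, m i • u i}

lemma aux_diam_le {s : Set ℝ} (h : Convex ℝ s) : EMetric.diam s ≤ volume s := by
  refine EMetric.diam_le fun x hx y hy => ?_
  have hsub : Set.Icc (min x y) (max x y) ⊆ s := by
    rcases le_total x y with hxy | hxy
    · simpa [hxy] using h.ordConnected.out hx hy
    · simpa [hxy] using h.ordConnected.out hy hx
  calc edist x y = ENNReal.ofReal (max x y - min x y) := by
        rw [edist_dist, Real.dist_eq, ← max_sub_min_eq_abs, max_comm, min_comm]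
    _ = volume (Set.Icc (min x y) (max x y)) := (Real.volume_Icc).symm
    _ ≤ volume s := measure_mono hsub

lemma mcomb_char {n s N : ℕ} (ρ : Fin N → ℝ) (hρ : ∀ i, 0 ≤ ρ i)
    (C : Set (Fin N → ℝ)) (hCpos : ∀ m ∈ C, ∀ i, 0 ≤ m i)
    (x : Fin N → EuclideanSpace ℝ (Fin n)) :
    Mcomb C (fun i => fiberBall (s := s) (x i) (ρ i)) =
      {p | ∃ m ∈ C, p.1 = ∑ i, m i • x i ∧ ‖p.2‖ ≤ ∑ i, m i * ρ i} := by
  ext p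
  constructor
  · rintro ⟨m, hm, u, hu, rfl⟩
    refine ⟨m, hm, ?_, ?_⟩
    · simp only [Prod.fst_sum, Prod.smul_fst]
      exact Finset.sum_congr rfl fun i _ => by rw [(hu i).1]
    · simp only [Prod.snd_sum, Prod.smul_snd]
      refine (norm_sum_le _ _).trans (Finset.sum_le_sum fun i _ => ?_)
      rw [norm_smul, Real.norm_eq_abs, abs_of_nonneg (hCpos m hm i)]
      exact mul_le_mul_of_nonneg_left (hu i).2 (hCpos m hm i)
  · rintro ⟨m, hm, h1, h2⟩
    set R := ∑ i, m i * ρ i with hR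
    by_cases hR0 : R = 0
    · have hz : p.2 = 0 := by
        have : ‖p.2‖ ≤ 0 := by rw [← hR0]; exact h2
        simpa using le_antisymm this (norm_nonneg _)
      refine ⟨m, hm, fun i => (x i, 0), fun i => ⟨rfl, by simp [hρ i]⟩, ?_⟩
      ext1
      · simpa [Prod.fst_sum, Prod.smul_fst] using h1
      · simp [Prod.snd_sum, Prod.smul_snd, hz]
    · have hRpos : 0 < R := lt_of_le_of_ne
        (Finset.sum_nonneg fun i _ => mul_nonneg (hCpos m hm i) (hρ i)) (Ne.symm hR0)
      refine ⟨m, hm, fun i => (x i, (ρ i / R) • p.2), fun i => ⟨rfl, ?_⟩, ?_⟩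
      · rw [norm_smul, Real.norm_eq_abs, abs_of_nonneg (div_nonneg (hρ i) hRpos.le)]
        calc ρ i / R * ‖p.2‖ ≤ ρ i / R * R :=
              mul_le_mul_of_nonneg_left h2 (div_nonneg (hρ i) hRpos.le)
          _ = ρ i := by field_simp
      · ext1
        · simpa [Prod.fst_sum, Prod.smul_fst] using h1
        · simp only [Prod.snd_sum, Prod.smul_snd]
          have : ∀ i : Fin N, m i • (ρ i / R) • p.2 = ((m i * ρ i) / R) • p.2 := fun i => by
            rw [smul_smul, mul_div_assoc]
          rw [Finset.sum_congr rfl fun i _ => this i, ← Finset.sum_smul, ← Finset.sum_div, ← hR,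
            div_self hR0, one_smul]

set_option maxHeartbeats 2000000 in
lemma main_aux {n s N : ℕ} (ρ : Fin N → ℝ) (hρ : ∀ i, 0 ≤ ρ i)
    (C : Set (Fin N → ℝ)) (hC : Convex ℝ C) (hCpos : ∀ m ∈ C, ∀ i, 0 ≤ m i)
    (θ : EuclideanSpace ℝ (Fin (n+1))) (hθ : ‖θ‖ = 1)
    (y : Fin N → EuclideanSpace ℝ (Fin (n+1))) (hy : ∀ i, inner ℝ (y i) θ = (0 : ℝ)) :
    (∀ t : Fin N → ℝ,
      volume (Mcomb C fun i => fiberBall (s := s) (y i + (-t i) • θ) (ρ i)) =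
        volume (Mcomb C fun i => fiberBall (s := s) (y i + t i • θ) (ρ i))) ∧
    (∀ t r : Fin N → ℝ, ∀ a b : ℝ, 0 ≤ a → 0 ≤ b → a + b = 1 →
      volume (Mcomb C fun i => fiberBall (s := s) (y i + (a * t i + b * r i) • θ) (ρ i)) ≤
        ENNReal.ofReal a *
            volume (Mcomb C fun i => fiberBall (s := s) (y i + t i • θ) (ρ i)) +
          ENNReal.ofReal b *
            volume (Mcomb C fun i => fiberBall (s := s) (y i + r i • θ) (ρ i))) := by
  classical
  set E₀ : EuclideanSpace ℝ (Fin (n+1)) := EuclideanSpace.single 0 1 with hE₀def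
  have hE₀norm : ‖θ‖ = ‖E₀‖ := by
    rw [hθ, hE₀def, EuclideanSpace.norm_single]; norm_num
  set g : EuclideanSpace ℝ (Fin (n+1)) ≃ₗᵢ[ℝ] EuclideanSpace ℝ (Fin (n+1)) :=
    Submodule.reflection (ℝ ∙ (θ - E₀))ᗮ with hgdef
  have hgθ : g θ = E₀ := Submodule.reflection_sub hE₀norm
  set v : (Fin N → ℝ) → EuclideanSpace ℝ (Fin (n+1)) := fun m => ∑ i, m i • y i with hvdef
  set R : (Fin N → ℝ) → ℝ := fun m => ∑ i, m i * ρ i with hRdef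
  set L : (Fin N → ℝ) → ((Fin N → ℝ) × EuclideanSpace ℝ (Fin s)) → ℝ :=
    fun u q => ∑ i, q.1 i * u i with hLdef
  set W : ((Fin N → ℝ) × EuclideanSpace ℝ (Fin s)) → ((Fin n → ℝ) × (Fin s → ℝ)) :=
    fun q => ((fun j => g (v q.1) ((0 : Fin (n+1)).succAbove j)), fun k => q.2 k) with hWdef
  set D : Set ((Fin N → ℝ) × EuclideanSpace ℝ (Fin s)) :=
    {q | q.1 ∈ C ∧ ‖q.2‖ ≤ R q.1} with hDdef
  set T : (Fin N → ℝ) → Set (((Fin n → ℝ) × (Fin s → ℝ)) × ℝ) :=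
    fun u => (fun q => (W q, L u q)) '' D with hTdef
  set Ψ : (EuclideanSpace ℝ (Fin (n+1)) × EuclideanSpace ℝ (Fin s)) ≃ᵐ
      (((Fin n → ℝ) × (Fin s → ℝ)) × ℝ) :=
    (MeasurableEquiv.prodCongr
      ((g.toHomeomorph.toMeasurableEquiv).trans
        (((MeasurableEquiv.toLp 2 (Fin (n+1) → ℝ)).symm).trans
          (MeasurableEquiv.piFinSuccAbove (fun _ => ℝ) 0)))
      ((MeasurableEquiv.toLp 2 (Fin s → ℝ)).symm)).trans
      ((MeasurableEquiv.prodAssoc).trans MeasurableEquiv.prodComm) with hΨdef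
  have hΨ : MeasurePreserving (⇑Ψ) volume volume := by
    have h1 : MeasurePreserving
        (Prod.map (⇑(MeasurableEquiv.piFinSuccAbove (fun _ : Fin (n+1) => ℝ) 0) ∘
            (⇑((MeasurableEquiv.toLp 2 (Fin (n+1) → ℝ)).symm) ∘ ⇑g))
          (⇑((MeasurableEquiv.toLp 2 (Fin s → ℝ)).symm)))
        (volume.prod volume) ((volume.prod volume).prod volume) := by
      refine MeasurePreserving.prod ?_ (EuclideanSpace.volume_preserving_symm_measurableEquiv_toLp _)
      exact (volume_preserving_piFinSuccAbove (fun _ : Fin (n+1) => ℝ) 0).comp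
        ((EuclideanSpace.volume_preserving_symm_measurableEquiv_toLp _).comp g.measurePreserving)
    have h2 := (Measure.measurePreserving_swap).comp
      ((measurePreserving_prodAssoc volume volume volume).comp h1)
    have hco : ⇑Ψ = (Prod.swap ∘
        (⇑(MeasurableEquiv.prodAssoc (α := ℝ) (β := Fin n → ℝ) (γ := Fin s → ℝ))) ∘
        (Prod.map (⇑(MeasurableEquiv.piFinSuccAbove (fun _ : Fin (n+1) => ℝ) 0) ∘
            (⇑((MeasurableEquiv.toLp 2 (Fin (n+1) → ℝ)).symm) ∘ ⇑g))
          (⇑((MeasurableEquiv.toLp 2 (Fin s → ℝ)).symm)))) := rfl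
    rw [show (volume : Measure (EuclideanSpace ℝ (Fin (n+1)) × EuclideanSpace ℝ (Fin s))) =
        volume.prod volume from Measure.volume_eq_prod _ _,
      show (volume : Measure (((Fin n → ℝ) × (Fin s → ℝ)) × ℝ)) = volume.prod volume from
        Measure.volume_eq_prod _ _, hco]
    exact h2
  -- linearity helpers
  have hvlin : ∀ (a b : ℝ) (m m' : Fin N → ℝ), v (a • m + b • m') = a • v m + b • v m' := by
    intro a b m m'
    simp only [hvdef, Finset.smul_sum, ← Finset.sum_add_distrib]
    refine Finset.sum_congr rfl fun i _ => ?_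
    simp only [Pi.add_apply, Pi.smul_apply, smul_eq_mul, add_smul, smul_smul]
  have hRlin : ∀ (a b : ℝ) (m m' : Fin N → ℝ), R (a • m + b • m') = a * R m + b * R m' := by
    intro a b m m'
    simp only [hRdef, Finset.mul_sum, ← Finset.sum_add_distrib]
    refine Finset.sum_congr rfl fun i _ => ?_
    simp only [Pi.add_apply, Pi.smul_apply, smul_eq_mul]; ring
  have hLlin : ∀ (u : Fin N → ℝ) (a b : ℝ) (q q' : (Fin N → ℝ) × EuclideanSpace ℝ (Fin s)),
      L u (a • q + b • q') = a * L u q + b * L u q' := by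
    intro u a b q q'
    simp only [hLdef, Finset.mul_sum, ← Finset.sum_add_distrib]
    refine Finset.sum_congr rfl fun i _ => ?_
    show (a • q.1 + b • q'.1) i * u i = _
    simp only [Pi.add_apply, Pi.smul_apply, smul_eq_mul]; ring
  have hLt' : ∀ (t r : Fin N → ℝ) (a b : ℝ) (q : (Fin N → ℝ) × EuclideanSpace ℝ (Fin s)),
      L (fun i => a * t i + b * r i) q = a * L t q + b * L r q := by
    intro t r a b q
    simp only [hLdef, Finset.mul_sum, ← Finset.sum_add_distrib]
    exact Finset.sum_congr rfl fun i _ => by ring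
  have hLneg : ∀ (t : Fin N → ℝ) (q : (Fin N → ℝ) × EuclideanSpace ℝ (Fin s)),
      L (fun i => -t i) q = -(L t q) := by
    intro t q
    simp only [hLdef, ← Finset.sum_neg_distrib]
    exact Finset.sum_congr rfl fun i _ => by ring
  -- orthogonality
  have hgv0 : ∀ m : Fin N → ℝ, g (v m) 0 = 0 := by
    intro m
    have h1 : (inner ℝ (g (v m)) (g θ) : ℝ) = inner ℝ (v m) θ := g.inner_map_map _ _
    have h2 : (inner ℝ (v m) θ : ℝ) = 0 := by
      rw [hvdef]
      simp only [sum_inner, real_inner_smul_left]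
      exact Finset.sum_eq_zero fun i _ => by rw [hy i, mul_zero]
    rw [hgθ, h2] at h1
    have h3 : (inner ℝ (g (v m)) E₀ : ℝ) = g (v m) 0 := by
      rw [hE₀def, EuclideanSpace.inner_single_right]; simp
    rw [h3] at h1
    exact h1
  -- Ψ application
  have hΨapp : ∀ (m : Fin N → ℝ) (c : ℝ) (z : EuclideanSpace ℝ (Fin s)),
      Ψ (v m + c • θ, z) = (W (m, z), c) := by
    intro m c z
    have hrfl : Ψ (v m + c • θ, z) =
        (((fun j => g (v m + c • θ) ((0 : Fin (n+1)).succAbove j)), fun k => z k),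
          g (v m + c • θ) 0) := rfl
    have hg1 : g (v m + c • θ) = g (v m) + c • E₀ := by
      rw [map_add, LinearIsometryEquiv.map_smul, hgθ]
    rw [hrfl]
    refine Prod.ext (Prod.ext ?_ rfl) ?_
    · show (fun j => g (v m + c • θ) ((0 : Fin (n+1)).succAbove j)) = _
      funext j
      rw [hg1]
      show g (v m) ((0 : Fin (n+1)).succAbove j) + c • (E₀ ((0 : Fin (n+1)).succAbove j)) = _
      rw [hE₀def]
      rw [Fin.succAbove_zero]
      rw [EuclideanSpace.single_apply]
      simp [Fin.succ_ne_zero]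
      rfl
    · show g (v m + c • θ) 0 = c
      rw [hg1]
      show g (v m) 0 + c • (E₀ 0) = c
      rw [hgv0, hE₀def, EuclideanSpace.single_apply]
      simp
  -- sum identity
  have hsum : ∀ (u m : Fin N → ℝ),
      ∑ i, m i • (y i + u i • θ) = v m + (∑ i, m i * u i) • θ := by
    intro u m
    rw [hvdef]
    simp only [smul_add, smul_smul]
    rw [Finset.sum_add_distrib, Finset.sum_smul]
  -- image characterization
  have hAT : ∀ u : Fin N → ℝ,
      ⇑Ψ '' (Mcomb C fun i => fiberBall (s := s) (y i + u i • θ) (ρ i)) = T u := by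
    intro u
    rw [mcomb_char ρ hρ C hCpos]
    ext w
    constructor
    · rintro ⟨p, ⟨m, hm, h1, h2⟩, rfl⟩
      refine ⟨(m, p.2), ⟨hm, h2⟩, ?_⟩
      have hp1 : p = (v m + (L u (m, p.2)) • θ, p.2) := by
        refine Prod.ext ?_ rfl
        rw [h1, hsum u m]
      rw [hp1, hΨapp]
    · rintro ⟨q, hq, rfl⟩
      refine ⟨(v q.1 + (L u q) • θ, q.2), ⟨q.1, hq.1, by rw [hsum], hq.2⟩, ?_⟩
      rw [hΨapp]
  -- volumes transfer
  have hvol : ∀ u : Fin N → ℝ,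
      volume (Mcomb C fun i => fiberBall (s := s) (y i + u i • θ) (ρ i)) = volume (T u) := by
    intro u
    rw [← hAT u, MeasurableEquiv.image_eq_preimage_symm]
    exact ((hΨ.symm Ψ).measure_preimage_equiv _).symm
  -- convexity of the Mcomb sets
  have hAconv : ∀ u : Fin N → ℝ,
      Convex ℝ (Mcomb C fun i => fiberBall (s := s) (y i + u i • θ) (ρ i)) := by
    intro u
    rw [mcomb_char ρ hρ C hCpos]
    rintro p ⟨m, hm, h1, h2⟩ p' ⟨m', hm', h1', h2'⟩ a b ha hb hab
    refine ⟨a • m + b • m', hC hm hm' ha hb hab, ?_, ?_⟩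
    · show (a • p + b • p').1 = _
      have key : ∀ i : Fin N, (a • m + b • m') i • (y i + u i • θ) =
          a • (m i • (y i + u i • θ)) + b • (m' i • (y i + u i • θ)) := fun i => by
        simp only [Pi.add_apply, Pi.smul_apply, smul_eq_mul, add_smul, smul_smul]
      rw [Finset.sum_congr rfl fun i _ => key i, Finset.sum_add_distrib, ← Finset.smul_sum,
        ← Finset.smul_sum]
      show a • p.1 + b • p'.1 = _
      rw [h1, h1']
    · show ‖(a • p + b • p').2‖ ≤ _
      have hRR : (∑ i, (a • m + b • m') i * ρ i) = a * (∑ i, m i * ρ i) + b * ∑ i, m' i * ρ i :=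
        hRlin a b m m'
      rw [hRR]
      show ‖a • p.2 + b • p'.2‖ ≤ _
      calc ‖a • p.2 + b • p'.2‖ ≤ ‖a • p.2‖ + ‖b • p'.2‖ := norm_add_le _ _
        _ = a * ‖p.2‖ + b * ‖p'.2‖ := by
            rw [norm_smul, norm_smul, Real.norm_eq_abs, Real.norm_eq_abs, abs_of_nonneg ha,
              abs_of_nonneg hb]
        _ ≤ _ := add_le_add (mul_le_mul_of_nonneg_left h2 ha) (mul_le_mul_of_nonneg_left h2' hb)
  -- null measurability of T
  haveI hHaar : (volume :
      Measure (EuclideanSpace ℝ (Fin (n+1)) × EuclideanSpace ℝ (Fin s))).IsAddHaarMeasure := by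
    rw [Measure.volume_eq_prod]
    exact Measure.prod.instIsAddHaarMeasure volume volume
  have hTnull : ∀ u : Fin N → ℝ, NullMeasurableSet (T u) volume := by
    intro u
    rw [← hAT u, MeasurableEquiv.image_eq_preimage_symm]
    exact ((hAconv u).nullMeasurableSet _).preimage (hΨ.symm Ψ).quasiMeasurePreserving
  -- fiber membership
  have hfib : ∀ (u : Fin N → ℝ) (ω : (Fin n → ℝ) × (Fin s → ℝ)) (τ : ℝ),
      (ω, τ) ∈ T u ↔ ∃ q ∈ D, W q = ω ∧ L u q = τ := by
    intro u ω τ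
    constructor
    · rintro ⟨q, hq, h⟩
      exact ⟨q, hq, congrArg Prod.fst h, congrArg Prod.snd h⟩
    · rintro ⟨q, hq, h1, h2⟩
      exact ⟨q, hq, by rw [Prod.ext_iff]; exact ⟨h1, h2⟩⟩
  -- convexity of D
  have hDconv : Convex ℝ D := by
    rintro q hq q' hq' a b ha hb hab
    refine ⟨hC hq.1 hq'.1 ha hb hab, ?_⟩
    show ‖(a • q + b • q').2‖ ≤ R ((a • q + b • q').1)
    have h1 : (a • q + b • q').1 = a • q.1 + b • q'.1 := rfl
    rw [h1, hRlin]
    show ‖a • q.2 + b • q'.2‖ ≤ _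
    calc ‖a • q.2 + b • q'.2‖ ≤ ‖a • q.2‖ + ‖b • q'.2‖ := norm_add_le _ _
      _ = a * ‖q.2‖ + b * ‖q'.2‖ := by
          rw [norm_smul, norm_smul, Real.norm_eq_abs, Real.norm_eq_abs, abs_of_nonneg ha,
            abs_of_nonneg hb]
      _ ≤ _ := add_le_add (mul_le_mul_of_nonneg_left hq.2 ha)
          (mul_le_mul_of_nonneg_left hq'.2 hb)
  -- W affine
  have hWlin : ∀ (a b : ℝ) (q q' : (Fin N → ℝ) × EuclideanSpace ℝ (Fin s)),
      W (a • q + b • q') = a • W q + b • W q' := by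
    intro a b q q'
    have h1 : (a • q + b • q').1 = a • q.1 + b • q'.1 := rfl
    refine Prod.ext ?_ ?_
    · show (fun j => g (v ((a • q + b • q').1)) ((0 : Fin (n+1)).succAbove j)) = _
      funext j
      rw [h1, hvlin, map_add, LinearIsometryEquiv.map_smul, LinearIsometryEquiv.map_smul]
      show a • (g (v q.1)) ((0 : Fin (n+1)).succAbove j) +
        b • (g (v q'.1)) ((0 : Fin (n+1)).succAbove j) = _
      rfl
    · show (fun k => (a • q + b • q').2 k) = _
      funext k
      show a • (q.2 k) + b • (q'.2 k) = _
      rfl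
  -- convexity of fibers of T
  have hfibconv : ∀ (u : Fin N → ℝ) (ω : (Fin n → ℝ) × (Fin s → ℝ)),
      Convex ℝ (Prod.mk ω ⁻¹' T u) := by
    intro u ω τ₁ h₁ τ₂ h₂ a b ha hb hab
    rw [Set.mem_preimage, hfib] at h₁ h₂
    obtain ⟨q₁, hq₁, hW₁, hL₁⟩ := h₁
    obtain ⟨q₂, hq₂, hW₂, hL₂⟩ := h₂
    rw [Set.mem_preimage, hfib]
    refine ⟨a • q₁ + b • q₂, hDconv hq₁ hq₂ ha hb hab, ?_, ?_⟩
    · rw [hWlin, hW₁, hW₂, ← add_smul, hab, one_smul]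
    · rw [hLlin, hL₁, hL₂]; rfl
  constructor
  · -- evenness
    intro t
    simp only [hvol]
    have hσmp : MeasurePreserving
        (Prod.map (id : ((Fin n → ℝ) × (Fin s → ℝ)) → _) (Neg.neg : ℝ → ℝ)) volume volume := by
      have h1 : MeasurePreserving
          (Prod.map (id : ((Fin n → ℝ) × (Fin s → ℝ)) → _) (Neg.neg : ℝ → ℝ))
          (volume.prod volume) (volume.prod volume) :=
        (MeasurePreserving.id volume).prod (Measure.measurePreserving_neg volume)
      rw [show (volume : Measure (((Fin n → ℝ) × (Fin s → ℝ)) × ℝ)) = volume.prod volume from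
        Measure.volume_eq_prod _ _]
      exact h1
    have hTneg : T (fun i => -t i) =
        (Prod.map (id : ((Fin n → ℝ) × (Fin s → ℝ)) → _) (Neg.neg : ℝ → ℝ)) ⁻¹' (T t) := by
      ext w
      obtain ⟨ω, τ⟩ := w
      rw [Set.mem_preimage]
      show (ω, τ) ∈ T _ ↔ (ω, -τ) ∈ T t
      rw [hfib, hfib]
      constructor
      · rintro ⟨q, hq, h1, h2⟩
        exact ⟨q, hq, h1, by rw [← h2, hLneg t q, neg_neg]⟩
      · rintro ⟨q, hq, h1, h2⟩
        exact ⟨q, hq, h1, by rw [hLneg t q, h2, neg_neg]⟩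
    rw [hTneg]
    exact hσmp.measure_preimage (hTnull t)
  · -- convexity
    intro t r a b ha hb hab
    simp only [hvol]
    obtain ⟨K, hKsub, hKmeas, hKae⟩ := (hTnull (fun i => a * t i + b * r i)).exists_measurable_subset_ae_eq
    set Ht := toMeasurable volume (T t) with hHt
    set Hr := toMeasurable volume (T r) with hHr
    have hHtm : MeasurableSet Ht := measurableSet_toMeasurable _ _
    have hHrm : MeasurableSet Hr := measurableSet_toMeasurable _ _
    have hpoint : ∀ ω : (Fin n → ℝ) × (Fin s → ℝ),
        volume (Prod.mk ω ⁻¹' K) ≤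
          ENNReal.ofReal a * volume (Prod.mk ω ⁻¹' Ht) +
            ENNReal.ofReal b * volume (Prod.mk ω ⁻¹' Hr) := by
      intro ω
      have h1 : volume (Prod.mk ω ⁻¹' K) ≤
          EMetric.diam (Prod.mk ω ⁻¹' (T (fun i => a * t i + b * r i))) :=
        le_trans (measure_mono (Set.preimage_mono hKsub)) (Real.volume_le_diam _)
      have h2 : EMetric.diam (Prod.mk ω ⁻¹' (T (fun i => a * t i + b * r i))) ≤
          ENNReal.ofReal a * EMetric.diam (Prod.mk ω ⁻¹' T t) +
            ENNReal.ofReal b * EMetric.diam (Prod.mk ω ⁻¹' T r) := by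
        refine EMetric.diam_le ?_
        rintro τ₁ h₁ τ₂ h₂
        rw [Set.mem_preimage, hfib] at h₁ h₂
        obtain ⟨q₁, hq₁, hW₁, hL₁⟩ := h₁
        obtain ⟨q₂, hq₂, hW₂, hL₂⟩ := h₂
        have e1 : τ₁ - τ₂ = a * (L t q₁ - L t q₂) + b * (L r q₁ - L r q₂) := by
          rw [← hL₁, ← hL₂, hLt', hLt']; ring
        have m1 : L t q₁ ∈ Prod.mk ω ⁻¹' T t := by
          rw [Set.mem_preimage, hfib]; exact ⟨q₁, hq₁, hW₁, rfl⟩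
        have m2 : L t q₂ ∈ Prod.mk ω ⁻¹' T t := by
          rw [Set.mem_preimage, hfib]; exact ⟨q₂, hq₂, hW₂, rfl⟩
        have m3 : L r q₁ ∈ Prod.mk ω ⁻¹' T r := by
          rw [Set.mem_preimage, hfib]; exact ⟨q₁, hq₁, hW₁, rfl⟩
        have m4 : L r q₂ ∈ Prod.mk ω ⁻¹' T r := by
          rw [Set.mem_preimage, hfib]; exact ⟨q₂, hq₂, hW₂, rfl⟩
        calc edist τ₁ τ₂ = ENNReal.ofReal |τ₁ - τ₂| := by rw [edist_dist, Real.dist_eq]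
          _ ≤ ENNReal.ofReal (a * |L t q₁ - L t q₂| + b * |L r q₁ - L r q₂|) := by
              apply ENNReal.ofReal_le_ofReal
              rw [e1]
              refine (abs_add_le _ _).trans ?_
              rw [abs_mul, abs_mul, abs_of_nonneg ha, abs_of_nonneg hb]
          _ = ENNReal.ofReal a * ENNReal.ofReal |L t q₁ - L t q₂| +
              ENNReal.ofReal b * ENNReal.ofReal |L r q₁ - L r q₂| := by
              rw [ENNReal.ofReal_add (mul_nonneg ha (abs_nonneg _)) (mul_nonneg hb (abs_nonneg _)),
                ENNReal.ofReal_mul ha, ENNReal.ofReal_mul hb]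
          _ ≤ ENNReal.ofReal a * EMetric.diam (Prod.mk ω ⁻¹' T t) +
              ENNReal.ofReal b * EMetric.diam (Prod.mk ω ⁻¹' T r) := by
              gcongr
              · rw [← Real.dist_eq, ← edist_dist]
                exact EMetric.edist_le_diam_of_mem m1 m2
              · rw [← Real.dist_eq, ← edist_dist]
                exact EMetric.edist_le_diam_of_mem m3 m4
      have h3t : EMetric.diam (Prod.mk ω ⁻¹' T t) ≤ volume (Prod.mk ω ⁻¹' Ht) :=
        (aux_diam_le (hfibconv t ω)).trans
          (measure_mono (Set.preimage_mono (subset_toMeasurable _ _)))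
      have h3r : EMetric.diam (Prod.mk ω ⁻¹' T r) ≤ volume (Prod.mk ω ⁻¹' Hr) :=
        (aux_diam_le (hfibconv r ω)).trans
          (measure_mono (Set.preimage_mono (subset_toMeasurable _ _)))
      refine h1.trans (h2.trans ?_)
      gcongr
    calc volume (T (fun i => a * t i + b * r i)) = volume K := (measure_congr hKae).symm
      _ = ∫⁻ ω, volume (Prod.mk ω ⁻¹' K) := by
          rw [Measure.volume_eq_prod, Measure.prod_apply hKmeas]
      _ ≤ ∫⁻ ω, (ENNReal.ofReal a * volume (Prod.mk ω ⁻¹' Ht) +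
            ENNReal.ofReal b * volume (Prod.mk ω ⁻¹' Hr)) := lintegral_mono hpoint
      _ = ENNReal.ofReal a * volume Ht + ENNReal.ofReal b * volume Hr := by
          rw [lintegral_add_left ((measurable_measure_prodMk_left hHtm).const_mul _),
            lintegral_const_mul _ (measurable_measure_prodMk_left hHtm),
            lintegral_const_mul _ (measurable_measure_prodMk_left hHrm),
            ← Measure.prod_apply hHtm, ← Measure.prod_apply hHrm]
          rfl
      _ = ENNReal.ofReal a * volume (T t) + ENNReal.ofReal b * volume (T r) := by
          rw [hHt, hHr, measure_toMeasurable, measure_toMeasurable]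

/-- Proposition 4.2: the function `F(x₁,…,x_N) = vol(⊕_C(B^s_{ρ₁}(x₁),…,B^s_{ρ_N}(x_N)))`
is Steiner convex: for every unit vector `θ` and points `yᵢ ∈ θ^⊥`, the map
`t ↦ F(y₁ + t₁θ, …, y_N + t_Nθ)` is even and convex. -/
theorem stmt3 (n s N : ℕ) (ρ : Fin N → ℝ) (hρ : ∀ i, 0 ≤ ρ i)
    (C : Set (Fin N → ℝ)) (hC : Convex ℝ C) (hCpos : ∀ m ∈ C, ∀ i, 0 ≤ m i)
    (θ : EuclideanSpace ℝ (Fin n)) (hθ : ‖θ‖ = 1)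
    (y : Fin N → EuclideanSpace ℝ (Fin n)) (hy : ∀ i, inner ℝ (y i) θ = (0 : ℝ)) :
    (∀ t : Fin N → ℝ,
      volume (Mcomb C fun i => fiberBall (s := s) (y i + (-t i) • θ) (ρ i)) =
        volume (Mcomb C fun i => fiberBall (s := s) (y i + t i • θ) (ρ i))) ∧
    (∀ t r : Fin N → ℝ, ∀ a b : ℝ, 0 ≤ a → 0 ≤ b → a + b = 1 →
      volume (Mcomb C fun i => fiberBall (s := s) (y i + (a * t i + b * r i) • θ) (ρ i)) ≤
        ENNReal.ofReal a *
            volume (Mcomb C fun i => fiberBall (s := s) (y i + t i • θ) (ρ i)) +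
          ENNReal.ofReal b *
            volume (Mcomb C fun i => fiberBall (s := s) (y i + r i • θ) (ρ i))) := by
  cases n with
  | zero =>
    exfalso
    rw [EuclideanSpace.norm_eq] at hθ
    simp at hθ
  | succ n => exact main_aux ρ hρ C hC hCpos θ hθ y hy

end
end

section
/- Let s ∈ ℕ and let f : ℝⁿ → [0,∞) be a measurable function with f^{1/s} integrable in the sense that K^s_f has finite volume. Then f(x) = κ_s^{-1} ∫_{ℝ^s} 1_{K^s_f}(x,y) dy for every x in the closure of supp f, and consequently ∫_{ℝⁿ} f(x) dx = κ_s^{-1} vol_{n+s}( K^s_f ), where κ_s is the volume of the s-dimensional unit Euclidean ball. -/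
open MeasureTheory Filter Pointwise ENNReal

noncomputable section

/-- `K^s_f ⊆ ℝⁿ × ℝˢ`, the body associated to `f`. -/
def Kbody (n s : ℕ) (f : EuclideanSpace ℝ (Fin n) → ℝ) :
    Set (EuclideanSpace ℝ (Fin n) × EuclideanSpace ℝ (Fin s)) :=
  {p | p.1 ∈ closure (Function.support f) ∧ ‖p.2‖ ≤ f p.1 ^ (1 / (s : ℝ))}

/-- Marginal formula: `f(x) = κ_s⁻¹ ∫_{ℝˢ} 1_{K^s_f}(x,y) dy` on the closure of the
support, and hence `∫ f = κ_s⁻¹ vol_{n+s}(K^s_f)`. -/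
theorem stmt5 (n s : ℕ) (hs : 0 < s) (f : EuclideanSpace ℝ (Fin n) → ℝ)
    (hmeas : Measurable f) (hf0 : ∀ x, 0 ≤ f x)
    (hfin : volume (Kbody n s f) < ⊤) :
    (∀ x ∈ closure (Function.support f),
      f x = (volume (Metric.ball (0 : EuclideanSpace ℝ (Fin s)) 1)).toReal⁻¹ *
        ∫ y : EuclideanSpace ℝ (Fin s),
          (Kbody n s f).indicator (fun _ => (1 : ℝ)) (x, y)) ∧
    ∫ x : EuclideanSpace ℝ (Fin n), f x =
      (volume (Metric.ball (0 : EuclideanSpace ℝ (Fin s)) 1)).toReal⁻¹ *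
        (volume (Kbody n s f)).toReal := by
  set κ := volume (Metric.ball (0 : EuclideanSpace ℝ (Fin s)) 1) with hκdef
  have hκ0 : κ ≠ 0 := (Metric.measure_ball_pos _ _ one_pos).ne'
  have hκtop : κ ≠ ⊤ := measure_ball_lt_top.ne
  have hκR : κ.toReal ≠ 0 := ENNReal.toReal_ne_zero.2 ⟨hκ0, hκtop⟩
  have hs' : (s : ℝ) ≠ 0 := Nat.cast_ne_zero.2 hs.ne'
  have hK : MeasurableSet (Kbody n s f) := by
    have h1 : MeasurableSet {p : EuclideanSpace ℝ (Fin n) × EuclideanSpace ℝ (Fin s) |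
        p.1 ∈ closure (Function.support f)} :=
      (isClosed_closure.preimage continuous_fst).measurableSet
    have h2 : MeasurableSet {p : EuclideanSpace ℝ (Fin n) × EuclideanSpace ℝ (Fin s) |
        ‖p.2‖ ≤ f p.1 ^ (1 / (s : ℝ))} :=
      measurableSet_le measurable_snd.norm
        ((Real.continuous_rpow_const (by positivity)).measurable.comp
          (hmeas.comp measurable_fst))
    exact h1.inter h2
  have hpow : ∀ x, (f x ^ (1 / (s : ℝ))) ^ s = f x := by
    intro x
    rw [← Real.rpow_natCast (f x ^ (1 / (s : ℝ))) s, ← Real.rpow_mul (hf0 x), one_div,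
      inv_mul_cancel₀ hs', Real.rpow_one]
  have hslice : ∀ x ∈ closure (Function.support f),
      Prod.mk x ⁻¹' Kbody n s f
        = Metric.closedBall (0 : EuclideanSpace ℝ (Fin s)) (f x ^ (1 / (s : ℝ))) := by
    intro x hx
    ext y
    simp [Kbody, Metric.mem_closedBall, dist_zero_right, hx]
  have hvol : ∀ x ∈ closure (Function.support f),
      volume (Prod.mk x ⁻¹' Kbody n s f) = ENNReal.ofReal (f x) * κ := by
    intro x hx
    rw [hslice x hx, Measure.addHaar_closedBall _ _ (Real.rpow_nonneg (hf0 x) _),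
      finrank_euclideanSpace_fin, hpow]
  have hvol' : ∀ x, volume (Prod.mk x ⁻¹' Kbody n s f) = ENNReal.ofReal (f x) * κ := by
    intro x
    by_cases hx : x ∈ closure (Function.support f)
    · exact hvol x hx
    · have hfx : f x = 0 := by
        by_contra h
        exact hx (subset_closure (Function.mem_support.2 h))
      have hempty : Prod.mk x ⁻¹' Kbody n s f = ∅ := by
        ext y; simp [Kbody, hx]
      simp [hempty, hfx]
  constructor
  · intro x hx
    have heq : (fun y => (Kbody n s f).indicator (fun _ => (1 : ℝ)) (x, y))
        = (Metric.closedBall (0 : EuclideanSpace ℝ (Fin s))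
            (f x ^ (1 / (s : ℝ)))).indicator (1 : EuclideanSpace ℝ (Fin s) → ℝ) := by
      funext y
      have hmem : (x, y) ∈ Kbody n s f
          ↔ y ∈ Metric.closedBall (0 : EuclideanSpace ℝ (Fin s)) (f x ^ (1 / (s : ℝ))) := by
        rw [← hslice x hx]; rfl
      by_cases h : (x, y) ∈ Kbody n s f
      · rw [Set.indicator_of_mem h, Set.indicator_of_mem (hmem.1 h)]
        rfl
      · rw [Set.indicator_of_notMem h,
          Set.indicator_of_notMem (fun hy => h (hmem.2 hy))]
    rw [heq, integral_indicator_one measurableSet_closedBall, measureReal_def,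
      Measure.addHaar_closedBall _ _ (Real.rpow_nonneg (hf0 x) _),
      finrank_euclideanSpace_fin, hpow, ENNReal.toReal_mul,
      ENNReal.toReal_ofReal (hf0 x)]
    field_simp
    rfl
  · have hprod : volume (Kbody n s f)
        = ∫⁻ x, volume (Prod.mk x ⁻¹' Kbody n s f) := by
      rw [Measure.volume_eq_prod _ _, Measure.prod_apply hK]
    have hKvol : volume (Kbody n s f) = (∫⁻ x, ENNReal.ofReal (f x)) * κ := by
      rw [hprod]
      simp_rw [hvol']
      rw [lintegral_mul_const _ hmeas.ennreal_ofReal]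
    have hint : ∫ x, f x = (∫⁻ x, ENNReal.ofReal (f x)).toReal := by
      rw [integral_eq_lintegral_of_nonneg_ae (ae_of_all _ hf0)
        hmeas.aestronglyMeasurable]
    rw [hint, hKvol, ENNReal.toReal_mul]
    field_simp
end
end
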